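/- arXiv:2111.01329 — 2 statements merged into one kernel-verified Lean document; each statement's English description precedes it below -/
import Mathlib

section
/- Let r < 0 and C_u > 0. Let z : ℝ → ℝ be differentiable and u : ℝ → ℝ satisfy z′(t) = −r·z(t) + u(t) and |u(t)| ≤ C_u for all t ≥ 0. If |z(0)| > C_u/(−r), then |z(t)| ≥ |z(0)| for all t ≥ 0; in particular the trajectory never enters the ball of radius C_u/(−r) and its magnitude does not decay. -/
/-! With `a = C_u / (-r)`, the control bound gives `ż ≥ -r (z - a)` whenever `u ≥ -C_u`, so
`t ↦ e^{r t} (z t - a)` is nondecreasing. Starting above `a`, this forces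
`z t - a ≥ e^{-r t} (z 0 - a) ≥ z 0 - a`, i.e. `z` never drops below `z 0`. The case `z 0 < -a`
is the same statement for the trajectory `(-z, -u)`. -/

open Set Real

section Comparison

variable {z : ℝ → ℝ} {r a : ℝ}

theorem monotoneOn_exp_mul_sub_of_neg_mul_sub_le_deriv (hz : Differentiable ℝ z)
    (h : ∀ t, 0 ≤ t → -r * (z t - a) ≤ deriv z t) :
    MonotoneOn (fun t => exp (r * t) * (z t - a)) (Ici 0) := by
  have hderiv : ∀ t, HasDerivAt (fun t => exp (r * t) * (z t - a))
      (exp (r * t) * (deriv z t + r * (z t - a))) t := fun t => by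
    have hexp : HasDerivAt (fun t => exp (r * t)) (exp (r * t) * r) t := by
      simpa using ((hasDerivAt_id t).const_mul r).exp
    exact (hexp.mul ((hz t).hasDerivAt.sub_const a)).congr_deriv (by ring)
  refine monotoneOn_of_deriv_nonneg (convex_Ici 0)
    (fun t _ => (hderiv t).continuousAt.continuousWithinAt)
    (fun t _ => (hderiv t).differentiableAt.differentiableWithinAt) fun t ht => ?_
  rw [interior_Ici] at ht
  rw [(hderiv t).deriv]
  have := h t (le_of_lt ht)
  exact mul_nonneg (exp_pos _).le (by linarith)

theorem apply_zero_le_of_neg_mul_sub_le_deriv (hr : r ≤ 0) (hz : Differentiable ℝ z)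
    (h : ∀ t, 0 ≤ t → -r * (z t - a) ≤ deriv z t) (ha : a ≤ z 0) :
    ∀ t, 0 ≤ t → z 0 ≤ z t := by
  intro t ht
  have hmono : z 0 - a ≤ exp (r * t) * (z t - a) := by
    simpa using monotoneOn_exp_mul_sub_of_neg_mul_sub_le_deriv hz h self_mem_Ici ht ht
  have hexp_pos : 0 < exp (r * t) := exp_pos _
  have hexp_le_one : exp (r * t) ≤ 1 := exp_le_one_iff.mpr (mul_nonpos_of_nonpos_of_nonneg hr ht)
  nlinarith

end Comparison

theorem apply_zero_le_of_deriv_eq_neg_mul_add {r Cu : ℝ} {z u : ℝ → ℝ} (hr : r < 0)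
    (hz : Differentiable ℝ z) (hode : ∀ t : ℝ, 0 ≤ t → deriv z t = -r * z t + u t)
    (hu : ∀ t : ℝ, 0 ≤ t → -Cu ≤ u t) (h0 : Cu / (-r) ≤ z 0) :
    ∀ t : ℝ, 0 ≤ t → z 0 ≤ z t := by
  refine apply_zero_le_of_neg_mul_sub_le_deriv hr.le hz (fun t ht => ?_) h0
  have hra : -r * (Cu / -r) = Cu := mul_div_cancel₀ Cu (neg_ne_zero.mpr hr.ne)
  rw [hode t ht, mul_sub, hra]
  linarith [hu t ht]

theorem scalar_constrained_no_decay_general (r Cu : ℝ) (hr : r < 0)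
    (z u : ℝ → ℝ) (hz : Differentiable ℝ z)
    (hode : ∀ t : ℝ, 0 ≤ t → deriv z t = -r * z t + u t)
    (hu : ∀ t : ℝ, 0 ≤ t → |u t| ≤ Cu)
    (h0 : Cu / (-r) < |z 0|) :
    ∀ t : ℝ, 0 ≤ t → |z 0| ≤ |z t| := by
  intro t ht
  rcases le_or_gt 0 (z 0) with hz0 | hz0
  · rw [abs_of_nonneg hz0] at h0 ⊢
    have := apply_zero_le_of_deriv_eq_neg_mul_add hr hz hode (fun s hs => (abs_le.mp (hu s hs)).1)
      h0.le t ht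
    exact this.trans (le_abs_self _)
  · rw [abs_of_neg hz0] at h0 ⊢
    have hode' : ∀ s, 0 ≤ s → deriv (-z) s = -r * (-z) s + (-u) s := fun s hs => by
      simp only [deriv.neg', Pi.neg_apply, hode s hs]
      ring
    have := apply_zero_le_of_deriv_eq_neg_mul_add hr hz.neg hode'
      (fun s hs => neg_le_neg (abs_le.mp (hu s hs)).2) h0.le t ht
    exact this.trans (neg_le_abs _)

/-- For `r < 0`, `C_u > 0`: any trajectory of `ż(t) = -r·z(t) + u(t)` with
`|u(t)| ≤ C_u` that starts with `|z(0)| > C_u/(-r)` satisfies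
`|z(t)| ≥ |z(0)|` for all `t ≥ 0`. -/
theorem scalar_constrained_no_decay (r Cu : ℝ) (hr : r < 0) (hCu : 0 < Cu)
    (z u : ℝ → ℝ) (hz : Differentiable ℝ z)
    (hode : ∀ t : ℝ, 0 ≤ t → deriv z t = -r * z t + u t)
    (hu : ∀ t : ℝ, 0 ≤ t → |u t| ≤ Cu)
    (h0 : Cu / (-r) < |z 0|) :
    ∀ t : ℝ, 0 ≤ t → |z 0| ≤ |z t| :=
  scalar_constrained_no_decay_general r Cu hr z u hz hode hu h0
end

section
/- Let μ > 0 and let x : ℝ → ℝ be differentiable with x(t) ≥ 0 for all t ≥ 0, x(0) = x₀ > 0, and x′(t) ≤ −2μ·x(t)^(3/2) for all t ≥ 0. Then x(t) ≤ x₀ / (1 + μ·√x₀·t)² for all t ≥ 0. In particular x(t) ≤ (μ·t)^(−2) for all t > 0. -/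
/-!
The barrier `φ t = decayBarrier c m t = c / (1 + m √c t)²` solves `φ' = -2 m φ^(3/2)` with `φ 0 = c`. For `m < μ`
it is a strict supersolution of the differential inequality: wherever `x` touches it, `x'` is
strictly below `φ'`, so the fencing theorem keeps `x ≤ φ`. Letting `m ↑ μ` gives the bound, and
`c / (1 + μ √c t)² ≤ c / (μ √c t)² = (μ t)⁻²`.
-/

open Filter Set Topology

noncomputable def decayBarrier (c m t : ℝ) : ℝ := c / (1 + m * √c * t) ^ 2

lemma rpow_three_halves_div_sq {a D : ℝ} (ha : 0 ≤ a) (hD : 0 < D) :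
    (a / D ^ 2) ^ ((3 : ℝ) / 2) = a * √a / D ^ 3 := by
  rw [Real.div_rpow ha (by positivity)]
  congr 1
  · rw [show (3 : ℝ) / 2 = 1 + 1 / 2 by norm_num, Real.rpow_add' ha (by norm_num),
      Real.rpow_one, Real.sqrt_eq_rpow]
  · rw [← Real.rpow_natCast D 2, ← Real.rpow_mul hD.le, ← Real.rpow_natCast D 3]
    norm_num

lemma hasDerivAt_decayBarrier {c m t : ℝ} (hc : 0 ≤ c) (hD : 0 < 1 + m * √c * t) :
    HasDerivAt (decayBarrier c m) (-2 * m * decayBarrier c m t ^ ((3 : ℝ) / 2)) t := by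
  have hden : HasDerivAt (fun s => (1 + m * √c * s) ^ 2)
      (2 * (1 + m * √c * t) * (m * √c)) t := by
    simpa [mul_comm, mul_assoc, mul_left_comm] using
      (((hasDerivAt_id t).const_mul (m * √c)).const_add 1).fun_pow 2
  refine ((hasDerivAt_const t c).fun_div hden (by positivity)).congr_deriv ?_
  rw [decayBarrier, rpow_three_halves_div_sq hc hD]
  field_simp
  ring

lemma le_decayBarrier_of_lt {f f' : ℝ → ℝ} {c μ m : ℝ} (hc : 0 < c) (hm : 0 ≤ m) (hmμ : m < μ)
    (hf : ∀ t, 0 ≤ t → HasDerivAt f (f' t) t) (hf0 : f 0 ≤ c)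
    (hf' : ∀ t, 0 ≤ t → f' t ≤ -2 * μ * f t ^ ((3 : ℝ) / 2)) {t : ℝ} (ht : 0 ≤ t) :
    f t ≤ decayBarrier c m t := by
  have hD : ∀ s, 0 ≤ s → 0 < 1 + m * √c * s := fun s hs =>
    add_pos_of_pos_of_nonneg one_pos (mul_nonneg (mul_nonneg hm c.sqrt_nonneg) hs)
  have hB : ∀ s, 0 ≤ s → HasDerivAt (decayBarrier c m)
      (-2 * m * decayBarrier c m s ^ ((3 : ℝ) / 2)) s := fun s hs =>
    hasDerivAt_decayBarrier hc.le (hD s hs)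
  refine image_le_of_deriv_right_lt_deriv_boundary'
    (fun s hs => (hf s hs.1).continuousAt.continuousWithinAt)
    (fun s hs => (hf s hs.1).hasDerivWithinAt) (by simpa [decayBarrier] using hf0)
    (fun s hs => (hB s hs.1).continuousAt.continuousWithinAt)
    (fun s hs => (hB s hs.1).hasDerivWithinAt) (fun s hs hfs => ?_) ⟨ht, le_rfl⟩
  have hpos : 0 < decayBarrier c m s ^ ((3 : ℝ) / 2) := by
    have := hD s hs.1
    unfold decayBarrier
    positivity
  calc f' s ≤ -2 * μ * decayBarrier c m s ^ ((3 : ℝ) / 2) := hfs ▸ hf' s hs.1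
    _ < -2 * m * decayBarrier c m s ^ ((3 : ℝ) / 2) := by nlinarith

lemma le_decayBarrier {f f' : ℝ → ℝ} {c μ : ℝ} (hc : 0 < c) (hμ : 0 < μ)
    (hf : ∀ t, 0 ≤ t → HasDerivAt f (f' t) t) (hf0 : f 0 ≤ c)
    (hf' : ∀ t, 0 ≤ t → f' t ≤ -2 * μ * f t ^ ((3 : ℝ) / 2)) {t : ℝ} (ht : 0 ≤ t) :
    f t ≤ decayBarrier c μ t := by
  have hD : 1 + μ * √c * t ≠ 0 := by positivity
  have hcont : ContinuousAt (fun m => decayBarrier c m t) μ := by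
    unfold decayBarrier
    fun_prop (disch := positivity)
  refine ge_of_tendsto (hcont.tendsto.mono_left (nhdsWithin_le_nhds (s := Iio μ))) ?_
  filter_upwards [Ioo_mem_nhdsLT hμ] with m hm
  exact le_decayBarrier_of_lt hc hm.1.le hm.2 hf hf0 hf' ht

lemma decayBarrier_le_rpow_neg_two {c μ t : ℝ} (hc : 0 ≤ c) (hμ : 0 < μ) (ht : 0 < t) :
    decayBarrier c μ t ≤ (μ * t) ^ (-2 : ℝ) := by
  have hμt : 0 < μ * t := mul_pos hμ ht
  rw [Real.rpow_neg hμt.le, Real.rpow_two, decayBarrier, ← one_div,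
    div_le_div_iff₀ (by positivity) (by positivity)]
  nlinarith [Real.sq_sqrt hc, mul_nonneg hμt.le (Real.sqrt_nonneg c)]

theorem algebraic_decay_general (μ x₀ : ℝ) (hμ : 0 < μ) (hx₀ : 0 < x₀)
    (x : ℝ → ℝ) (hx : Differentiable ℝ x)
    (h0 : x 0 = x₀)
    (hdec : ∀ t : ℝ, 0 ≤ t → deriv x t ≤ -2 * μ * x t ^ ((3 : ℝ) / 2)) :
    (∀ t : ℝ, 0 ≤ t → x t ≤ x₀ / (1 + μ * Real.sqrt x₀ * t) ^ 2) ∧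
    (∀ t : ℝ, 0 < t → x t ≤ (μ * t) ^ (-2 : ℝ)) := by
  have bound : ∀ t : ℝ, 0 ≤ t → x t ≤ decayBarrier x₀ μ t := fun t ht =>
    le_decayBarrier hx₀ hμ (fun s _ => (hx s).hasDerivAt) h0.le hdec ht
  exact ⟨bound, fun t ht => (bound t ht.le).trans (decayBarrier_le_rpow_neg_two hx₀.le hμ ht)⟩

/-- If `x : ℝ → ℝ` is differentiable, nonnegative on `[0,∞)`, with `x 0 = x₀ > 0`
and `x′(t) ≤ -2μ·x(t)^(3/2)` for `t ≥ 0` (`μ > 0`), then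
`x(t) ≤ x₀/(1 + μ√x₀·t)²` for all `t ≥ 0`; in particular `x(t) ≤ (μt)⁻²` for `t > 0`. -/
theorem algebraic_decay (μ x₀ : ℝ) (hμ : 0 < μ) (hx₀ : 0 < x₀)
    (x : ℝ → ℝ) (hx : Differentiable ℝ x)
    (hpos : ∀ t : ℝ, 0 ≤ t → 0 ≤ x t) (h0 : x 0 = x₀)
    (hdec : ∀ t : ℝ, 0 ≤ t → deriv x t ≤ -2 * μ * x t ^ ((3 : ℝ) / 2)) :
    (∀ t : ℝ, 0 ≤ t → x t ≤ x₀ / (1 + μ * Real.sqrt x₀ * t) ^ 2) ∧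
    (∀ t : ℝ, 0 < t → x t ≤ (μ * t) ^ (-2 : ℝ)) :=
  algebraic_decay_general μ x₀ hμ hx₀ x hx h0 hdec
end
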